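/- Let f : I ⊆ (0,∞) → (0,∞) be differentiable on I°, let a, b ∈ I° with a < b, f' integrable on [a,b], and suppose |f'|^q is s-geometrically convex on [a,b] for some q ≥ 1 and s ∈ (0,1]. If |f'(b)| ≤ 1 ≤ |f'(a)|, then |f(√(ab)) − (1/(ln b − ln a)) ∫_a^b f(x)/x dx| ≤ ln(b/a) · (1/2)^{3−1/q} · [ a|f'(a)| g₁(θ₃)^{1/q} + b|f'(b)|^s |f'(a)|^{1−s} g₁(θ₄)^{1/q} ]. -/

import Mathlib

open Real MeasureTheory Set

/-- `g` is `s`-geometrically convex on `J`. -/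
def SGeometricallyConvexOn (s : ℝ) (J : Set ℝ) (g : ℝ → ℝ) : Prop :=
  ∀ x ∈ J, ∀ y ∈ J, ∀ t ∈ Set.Icc (0:ℝ) 1,
    g (x ^ t * y ^ (1 - t)) ≤ g x ^ t ^ s * g y ^ (1 - t) ^ s

noncomputable def g₁ (u : ℝ) : ℝ :=
  if u = 1 then 1/2 else (u * Real.log u - u + 1) / (Real.log u) ^ 2

noncomputable def g₂ (u : ℝ) : ℝ :=
  if u = 1 then 1 else (u - 1) / Real.log u

/-!
The substitution `x = b ^ t * a ^ (1 - t)` turns the left-hand side into `|φ (1/2) - ∫₀¹ φ|` with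
`φ t = f (b ^ t * a ^ (1 - t))`, and integration by parts against the midpoint kernel bounds this by
`∫₀^{1/2} t (|φ' t| + |φ' (1 - t)|) dt`. Since `|f' b| ≤ 1 ≤ |f' a|`, `s`-geometric convexity and
Bernoulli's inequality give `|f' (b ^ t * a ^ (1 - t))| ≤ |f' b| ^ (s t) * |f' a| ^ (1 - s t)`, so
`|φ' t|` is dominated by an exponential `K c ^ t`. The weighted power-mean inequality with weight
`t` on `[0, 1/2]`, together with `∫₀^{1/2} t c ^ (2 t) dt = g₁ c / 4`, then yields the bound.
-/

section GeometricInterpolation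

variable {a b : ℝ}

theorem rpow_mul_rpow_one_sub_eq_exp (ha : 0 < a) (hb : 0 < b) (t : ℝ) :
    b ^ t * a ^ (1 - t) = exp (log a + t * (log b - log a)) := by
  rw [rpow_def_of_pos hb, rpow_def_of_pos ha, ← exp_add]
  ring_nf

theorem hasDerivAt_rpow_mul_rpow_one_sub (ha : 0 < a) (hb : 0 < b) (t : ℝ) :
    HasDerivAt (fun t => b ^ t * a ^ (1 - t)) (b ^ t * a ^ (1 - t) * (log b - log a)) t := by
  simp only [rpow_mul_rpow_one_sub_eq_exp ha hb]
  exact (((hasDerivAt_id t).mul_const _).const_add _).exp.congr_deriv (by simp)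

theorem rpow_mul_rpow_one_sub_mem_Icc (ha : 0 < a) (hab : a ≤ b) {t : ℝ} (ht : t ∈ Icc 0 1) :
    b ^ t * a ^ (1 - t) ∈ Icc a b := by
  have h1t : 0 ≤ 1 - t := sub_nonneg.2 ht.2
  have hb : 0 < b := ha.trans_le hab
  constructor
  · calc a = a ^ t * a ^ (1 - t) := by rw [← rpow_add ha]; simp
      _ ≤ b ^ t * a ^ (1 - t) :=
        mul_le_mul_of_nonneg_right (rpow_le_rpow ha.le hab ht.1) (by positivity)
  · calc b ^ t * a ^ (1 - t) ≤ b ^ t * b ^ (1 - t) :=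
          mul_le_mul_of_nonneg_left (rpow_le_rpow ha.le hab h1t) (by positivity)
      _ = b := by rw [← rpow_add hb]; simp

theorem integral_div_eq_mul_integral_rpow_mul_rpow_one_sub (ha : 0 < a) (hab : a ≤ b)
    {g : ℝ → ℝ} (hg : ContinuousOn g (Icc a b)) :
    ∫ x in a..b, g x / x = (log b - log a) * ∫ t in (0:ℝ)..1, g (b ^ t * a ^ (1 - t)) := by
  have hb : 0 < b := ha.trans_le hab
  have hderiv : ∀ t ∈ uIcc (0:ℝ) 1, HasDerivAt (fun t => b ^ t * a ^ (1 - t))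
      (b ^ t * a ^ (1 - t) * (log b - log a)) t :=
    fun t _ => hasDerivAt_rpow_mul_rpow_one_sub ha hb t
  have hcont : ContinuousOn (fun t : ℝ => b ^ t * a ^ (1 - t) * (log b - log a)) (uIcc 0 1) :=
    fun t _ => ((hasDerivAt_rpow_mul_rpow_one_sub ha hb t).continuousAt.mul
      continuousAt_const).continuousWithinAt
  have himage : (fun t : ℝ => b ^ t * a ^ (1 - t)) '' uIcc 0 1 ⊆ Icc a b := by
    rintro _ ⟨t, ht, rfl⟩
    rw [uIcc_of_le zero_le_one] at ht
    exact rpow_mul_rpow_one_sub_mem_Icc ha hab ht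
  have hgx : ContinuousOn (fun x => g x / x) (Icc a b) :=
    hg.div continuousOn_id fun x hx => (ha.trans_le hx.1).ne'
  have := intervalIntegral.integral_comp_mul_deriv' hderiv hcont (hgx.mono himage)
  simp only [Function.comp_def, rpow_zero, sub_zero, rpow_one, one_mul, sub_self, mul_one]
    at this
  rw [← this, ← intervalIntegral.integral_const_mul]
  refine intervalIntegral.integral_congr fun t _ => ?_
  have : b ^ t * a ^ (1 - t) ≠ 0 := by positivity
  field_simp

theorem IntervalIntegrable.comp_rpow_mul_rpow_one_sub_mul_deriv (ha : 0 < a) (hab : a < b)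
    {g : ℝ → ℝ} (hg : IntervalIntegrable g volume a b) :
    IntervalIntegrable
      (fun t => g (b ^ t * a ^ (1 - t)) * (b ^ t * a ^ (1 - t) * (Real.log b - Real.log a)))
      volume 0 1 := by
  have hb : 0 < b := ha.trans hab
  have hL : 0 < Real.log b - Real.log a := sub_pos.2 (Real.log_lt_log ha hab)
  have hmono : StrictMono (fun t : ℝ => b ^ t * a ^ (1 - t)) := by
    simp only [rpow_mul_rpow_one_sub_eq_exp ha hb]
    exact Real.exp_strictMono.comp fun t u htu =>
      add_lt_add_right (mul_lt_mul_of_pos_right htu hL) _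
  rw [intervalIntegrable_iff_integrableOn_Icc_of_le zero_le_one]
  rw [intervalIntegrable_iff_integrableOn_Icc_of_le hab.le] at hg
  have himage : (fun t : ℝ => b ^ t * a ^ (1 - t)) '' Icc 0 1 ⊆ Icc a b := by
    rintro _ ⟨t, ht, rfl⟩
    exact rpow_mul_rpow_one_sub_mem_Icc ha hab.le ht
  have := (integrableOn_image_iff_integrableOn_abs_deriv_smul measurableSet_Icc
    (fun t _ => (hasDerivAt_rpow_mul_rpow_one_sub ha hb t).hasDerivWithinAt)
    hmono.injective.injOn g).1 (hg.mono_set himage)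
  refine this.congr_fun (fun t _ => ?_) measurableSet_Icc
  dsimp only
  rw [smul_eq_mul, mul_comm, abs_of_pos (by positivity)]

end GeometricInterpolation

theorem SGeometricallyConvexOn.le_rpow_mul_rpow {s : ℝ} {J : Set ℝ} {G : ℝ → ℝ}
    (hs₀ : 0 ≤ s) (hs₁ : s ≤ 1) (hG : SGeometricallyConvexOn s J G) {x y t : ℝ}
    (hx : x ∈ J) (hy : y ∈ J) (hGx₀ : 0 ≤ G x) (hGx₁ : G x ≤ 1) (hGy : 1 ≤ G y)
    (ht : t ∈ Icc 0 1) :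
    G (x ^ t * y ^ (1 - t)) ≤ G x ^ (s * t) * G y ^ (1 - s * t) := by
  have hst : s * t ≤ t ^ s :=
    calc s * t ≤ t := mul_le_of_le_one_left ht.1 hs₁
      _ = t ^ (1 : ℝ) := (rpow_one t).symm
      _ ≤ t ^ s := rpow_le_rpow_of_exponent_ge' ht.1 ht.2 hs₀ hs₁
  have hbernoulli : (1 - t) ^ s ≤ 1 - s * t := by
    simpa [sub_eq_add_neg, mul_neg] using
      rpow_one_add_le_one_add_mul_self (by linarith [ht.2] : -1 ≤ -t) hs₀ hs₁
  calc G (x ^ t * y ^ (1 - t)) ≤ G x ^ t ^ s * G y ^ (1 - t) ^ s := hG x hx y hy t ht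
    _ ≤ G x ^ (s * t) * G y ^ (1 - s * t) :=
      mul_le_mul (rpow_le_rpow_of_exponent_ge' hGx₀ hGx₁ (mul_nonneg hs₀ ht.1) hst)
        (rpow_le_rpow_of_exponent_le hGy hbernoulli) (by positivity) (by positivity)

theorem SGeometricallyConvexOn.abs_le_rpow_mul_rpow {s q : ℝ} {J : Set ℝ} {g : ℝ → ℝ}
    (hq : 0 < q) (hs₀ : 0 ≤ s) (hs₁ : s ≤ 1)
    (hg : SGeometricallyConvexOn s J (fun x => |g x| ^ q)) {x y t : ℝ} (hx : x ∈ J) (hy : y ∈ J)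
    (hgx : |g x| ≤ 1) (hgy : 1 ≤ |g y|) (ht : t ∈ Icc 0 1) :
    |g (x ^ t * y ^ (1 - t))| ≤ |g x| ^ (s * t) * |g y| ^ (1 - s * t) := by
  have hy₀ : 0 ≤ |g y| := abs_nonneg _
  have := hg.le_rpow_mul_rpow hs₀ hs₁ hx hy (by positivity) (rpow_le_one (abs_nonneg _) hgx hq.le)
    (one_le_rpow hgy hq.le) ht
  rwa [← rpow_mul (abs_nonneg _), ← rpow_mul hy₀, mul_comm q, mul_comm q,
    rpow_mul (abs_nonneg _), rpow_mul hy₀, ← mul_rpow (by positivity) (by positivity),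
    rpow_le_rpow_iff (abs_nonneg _) (by positivity) hq] at this

theorem integral_mul_le_weight_mul_Lp_of_nonneg {α : Type*} [MeasurableSpace α] {μ : Measure α}
    {w g : α → ℝ} {q : ℝ} (hq : 1 ≤ q) (hw : ∀ᵐ x ∂μ, 0 ≤ w x) (hg : ∀ᵐ x ∂μ, 0 ≤ g x)
    (hgm : AEStronglyMeasurable g μ) (hwi : Integrable w μ)
    (hwgi : Integrable (fun x => w x * g x ^ q) μ) :
    ∫ x, w x * g x ∂μ ≤ (∫ x, w x ∂μ) ^ (1 - 1 / q) * (∫ x, w x * g x ^ q ∂μ) ^ (1 / q) := by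
  rcases hq.eq_or_lt with rfl | hq
  · simp
  set p := q.conjExponent
  have hpq : p.HolderConjugate q := (Real.HolderConjugate.conjExponent hq).symm
  have hp : 0 < p := hpq.pos
  have hq₀ : 0 < q := hpq.symm.pos
  have hpq' : 1 / p = 1 - 1 / q := by
    rw [eq_sub_iff_add_eq, one_div, one_div, hpq.inv_add_inv_eq_one]
  have hwm : AEStronglyMeasurable (fun x => w x ^ (1 / p)) μ :=
    (hwi.aemeasurable.pow_const _).aestronglyMeasurable
  have hF : MemLp (fun x => w x ^ (1 / p)) (ENNReal.ofReal p) μ := by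
    refine (integrable_norm_rpow_iff hwm (by simpa using hp) ENNReal.ofReal_ne_top).1 ?_
    refine hwi.congr ?_
    filter_upwards [hw] with x hx
    rw [ENNReal.toReal_ofReal hp.le, norm_of_nonneg (rpow_nonneg hx _), ← rpow_mul hx,
      one_div_mul_cancel hp.ne', rpow_one]
  have hG : MemLp (fun x => w x ^ (1 / q) * g x) (ENNReal.ofReal q) μ := by
    refine (integrable_norm_rpow_iff ((hwi.aemeasurable.pow_const _).aestronglyMeasurable.mul hgm)
      (by simpa using hq₀) ENNReal.ofReal_ne_top).1 ?_
    refine hwgi.congr ?_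
    filter_upwards [hw, hg] with x hx hgx
    dsimp only [Pi.mul_apply]
    rw [ENNReal.toReal_ofReal hq₀.le, norm_of_nonneg (by positivity), mul_rpow (by positivity) hgx,
      ← rpow_mul hx, one_div_mul_cancel hq₀.ne', rpow_one]
  have key := integral_mul_le_Lp_mul_Lq_of_nonneg hpq
    (by filter_upwards [hw] with x hx using rpow_nonneg hx _)
    (by filter_upwards [hw, hg] with x hx hgx using show 0 ≤ _ by positivity) hF hG
  have hFG : ∫ x, w x ^ (1 / p) * (w x ^ (1 / q) * g x) ∂μ = ∫ x, w x * g x ∂μ := by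
    refine integral_congr_ae ?_
    filter_upwards [hw] with x hx
    rw [← mul_assoc, ← rpow_add' hx (by rw [hpq', sub_add_cancel]; exact one_ne_zero), hpq',
      sub_add_cancel, rpow_one]
  have hFp : ∫ x, (w x ^ (1 / p)) ^ p ∂μ = ∫ x, w x ∂μ := by
    refine integral_congr_ae ?_
    filter_upwards [hw] with x hx
    rw [← rpow_mul hx, one_div_mul_cancel hp.ne', rpow_one]
  have hGq : ∫ x, (w x ^ (1 / q) * g x) ^ q ∂μ = ∫ x, w x * g x ^ q ∂μ := by
    refine integral_congr_ae ?_
    filter_upwards [hw, hg] with x hx hgx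
    rw [mul_rpow (by positivity) hgx, ← rpow_mul hx, one_div_mul_cancel hq₀.ne', rpow_one]
  rwa [hFG, hFp, hGq, hpq'] at key

theorem integral_mul_rpow_two_mul {c : ℝ} (hc : 0 ≤ c) :
    ∫ t in (0:ℝ)..1 / 2, t * c ^ (2 * t) = g₁ c / 4 := by
  rcases hc.eq_or_lt with rfl | hc
  · have : ∀ t : ℝ, t * (0 : ℝ) ^ (2 * t) = 0 := fun t => by
      rcases eq_or_ne t 0 with rfl | ht
      · simp
      · simp [zero_rpow (mul_ne_zero two_ne_zero ht)]
    -- `g₁ 0 = 1 / 0 = 0`, as `log 0 = 0`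
    simp [this, g₁]
  rcases eq_or_ne c 1 with rfl | hc₁
  · norm_num [g₁]
  have hL : log c ≠ 0 := log_ne_zero_of_pos_of_ne_one hc hc₁
  have hderiv : ∀ t : ℝ, HasDerivAt
      (fun t => t * c ^ (2 * t) / (2 * log c) - c ^ (2 * t) / (4 * log c ^ 2))
      (t * c ^ (2 * t)) t := by
    intro t
    have hpow := ((hasDerivAt_id' t).const_mul 2).const_rpow hc
    refine ((((hasDerivAt_id' t).mul hpow).div_const (2 * log c)).sub
      (hpow.div_const (4 * log c ^ 2))).congr_deriv ?_
    field_simp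
    ring
  have hcont : Continuous fun t : ℝ => t * c ^ (2 * t) :=
    continuous_id.mul ((continuous_const_rpow hc.ne').comp (continuous_const_mul 2))
  rw [intervalIntegral.integral_eq_sub_of_hasDerivAt (fun t _ => hderiv t)
    (hcont.intervalIntegrable _ _), g₁, if_neg hc₁]
  norm_num
  field_simp
  ring

theorem g₁_nonneg {c : ℝ} (hc : 0 ≤ c) : 0 ≤ g₁ c := by
  have := intervalIntegral.integral_nonneg (μ := volume) (by norm_num : (0:ℝ) ≤ 1 / 2)
    fun t ht => mul_nonneg ht.1 (rpow_nonneg hc (2 * t))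
  rw [integral_mul_rpow_two_mul hc] at this
  linarith

theorem continuous_mul_rpow {c : ℝ} (hc : 0 ≤ c) : Continuous fun t : ℝ => t * c ^ t := by
  rcases hc.eq_or_lt with rfl | hc
  · have : (fun t : ℝ => t * (0:ℝ) ^ t) = 0 := funext fun t => by
      rcases eq_or_ne t 0 with rfl | ht <;> simp [*]
    rw [this]
    exact continuous_const
  · exact continuous_id.mul (continuous_const_rpow hc.ne')

theorem integral_mul_le_of_le_mul_rpow {h : ℝ → ℝ} {K c q : ℝ} (hq : 1 ≤ q) (hK : 0 ≤ K)
    (hc : 0 ≤ c) (hh : IntervalIntegrable (fun t => t * h t) volume 0 (1 / 2))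
    (hle : ∀ t ∈ Icc (0:ℝ) (1 / 2), h t ≤ K * c ^ t) :
    ∫ t in (0:ℝ)..1 / 2, t * h t ≤ (1 / 2) ^ (3 - 1 / q) * (K * g₁ (c ^ (q / 2)) ^ (1 / q)) := by
  have hq₀ : 0 < q := zero_lt_one.trans_le hq
  have hpow : ∀ t : ℝ, t * (K * c ^ t) ^ q = K ^ q * (t * (c ^ (q / 2)) ^ (2 * t)) := fun t => by
    rw [mul_rpow hK (rpow_nonneg hc _), ← rpow_mul hc, ← rpow_mul hc]
    ring_nf
  have hcont : Continuous fun t : ℝ => t * (K * c ^ t) :=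
    ((continuous_mul_rpow hc).const_mul K).congr fun t => by ring
  have hcont' : Continuous fun t : ℝ => t * (K * c ^ t) ^ q :=
    ((continuous_mul_rpow (rpow_nonneg hc q)).const_mul (K ^ q)).congr fun t => by
      rw [mul_rpow hK (rpow_nonneg hc _), ← rpow_mul hc, ← rpow_mul hc, mul_comm t q]
      ring
  have hnonneg : ∀ᵐ t ∂volume.restrict (Ioc (0:ℝ) (1 / 2)), 0 ≤ t :=
    (ae_restrict_iff' measurableSet_Ioc).2 (ae_of_all _ fun t ht => ht.1.le)
  have hholder := integral_mul_le_weight_mul_Lp_of_nonneg hq hnonneg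
    (hnonneg.mono fun t _ => by positivity)
    (by fun_prop : Measurable fun t : ℝ => K * c ^ t).aestronglyMeasurable
    continuous_id.integrableOn_Ioc hcont'.integrableOn_Ioc
  simp only [← intervalIntegral.integral_of_le (by norm_num : (0:ℝ) ≤ 1 / 2), integral_id, hpow,
    intervalIntegral.integral_const_mul, integral_mul_rpow_two_mul (rpow_nonneg hc _)] at hholder
  calc ∫ t in (0:ℝ)..1 / 2, t * h t ≤ ∫ t in (0:ℝ)..1 / 2, t * (K * c ^ t) :=
        intervalIntegral.integral_mono_on (by norm_num) hh (hcont.intervalIntegrable _ _)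
          fun t ht => mul_le_mul_of_nonneg_left (hle t ht) ht.1
    _ ≤ _ := hholder
    _ = (1 / 2) ^ (3 - 1 / q) * (K * g₁ (c ^ (q / 2)) ^ (1 / q)) := by
      have hg := g₁_nonneg (rpow_nonneg hc (q / 2))
      have h8 : ((1 / 2 : ℝ) ^ 2 - 0 ^ 2) / 2 = (1 / 2) ^ (3:ℝ) := by norm_num
      have h4 : g₁ (c ^ (q / 2)) / 4 = g₁ (c ^ (q / 2)) * (1 / 2) ^ (2:ℝ) := by norm_num; ring
      rw [h8, h4, mul_rpow (by positivity) (by positivity), mul_rpow hg (by positivity),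
        ← rpow_mul (by positivity), ← rpow_mul hK, ← rpow_mul (by positivity),
        mul_one_div_cancel hq₀.ne', rpow_one,
        show (1 / 2 : ℝ) ^ (3 - 1 / q) = (1 / 2) ^ (3 * (1 - 1 / q)) * (1 / 2) ^ (2 * (1 / q)) by
          rw [← rpow_add (by norm_num)]; congr 1; ring]
      ring

theorem midpoint_sub_integral_eq {φ φ' : ℝ → ℝ} (hφ : ∀ t ∈ Icc (0:ℝ) 1, HasDerivAt φ (φ' t) t)
    (hφ' : IntervalIntegrable φ' volume 0 1) :
    φ (1 / 2) - ∫ t in (0:ℝ)..1, φ t =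
      (∫ t in (0:ℝ)..1 / 2, t * φ' t) - ∫ t in (0:ℝ)..1 / 2, t * φ' (1 - t) := by
  have hφc : ContinuousOn φ (uIcc 0 1) := fun t ht =>
    (hφ t (by rwa [uIcc_of_le zero_le_one] at ht)).continuousAt.continuousWithinAt
  have hleft : uIcc (0:ℝ) (1 / 2) ⊆ uIcc 0 1 := uIcc_subset_uIcc_left (by norm_num)
  have hright : uIcc (1 / 2 : ℝ) 1 ⊆ uIcc 0 1 := uIcc_subset_uIcc_right (by norm_num)
  have hφ_of {s : Set ℝ} (hs : s ⊆ uIcc 0 1) : ∀ t ∈ s, HasDerivAt φ (φ' t) t := fun t ht =>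
    hφ t (by simpa [uIcc_of_le zero_le_one] using hs ht)
  have hparts₁ := intervalIntegral.integral_mul_deriv_eq_deriv_mul
    (fun t _ => hasDerivAt_id' t) (hφ_of hleft) intervalIntegrable_const (hφ'.mono_set hleft)
  have hparts₂ := intervalIntegral.integral_mul_deriv_eq_deriv_mul
    (fun t _ => (hasDerivAt_id' t).sub_const 1) (hφ_of hright) intervalIntegrable_const
    (hφ'.mono_set hright)
  have hreflect :
      ∫ t in (0:ℝ)..1 / 2, t * φ' (1 - t) = ∫ t in (1 / 2 : ℝ)..1, (1 - t) * φ' t := by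
    have := intervalIntegral.integral_comp_sub_left (fun t => (1 - t) * φ' t) (1 : ℝ)
      (a := 0) (b := 1 / 2)
    norm_num at this ⊢
    exact this
  rw [hreflect, ← intervalIntegral.integral_add_adjacent_intervals
    ((hφc.mono hleft).intervalIntegrable) ((hφc.mono hright).intervalIntegrable)]
  simp only [one_mul] at hparts₁ hparts₂
  have hneg :
      ∫ t in (1 / 2 : ℝ)..1, (1 - t) * φ' t = -∫ t in (1 / 2 : ℝ)..1, (t - 1) * φ' t := by
    rw [← intervalIntegral.integral_neg]
    congr 1; ext t; ring
  rw [hneg, hparts₁, hparts₂]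
  ring

theorem abs_midpoint_sub_integral_le {φ φ' : ℝ → ℝ} {K c q : ℝ} (hq : 1 ≤ q) (hK : 0 ≤ K)
    (hc : 0 ≤ c) (hφ : ∀ t ∈ Icc (0:ℝ) 1, HasDerivAt φ (φ' t) t)
    (hφ' : IntervalIntegrable φ' volume 0 1) (hle : ∀ t ∈ Icc (0:ℝ) 1, |φ' t| ≤ K * c ^ t) :
    |φ (1 / 2) - ∫ t in (0:ℝ)..1, φ t| ≤ (1 / 2) ^ (3 - 1 / q) *
      (K * g₁ (c ^ (q / 2)) ^ (1 / q) + K * c * g₁ (c⁻¹ ^ (q / 2)) ^ (1 / q)) := by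
  have habs_integral {h : ℝ → ℝ} (hh : IntervalIntegrable h volume 0 (1 / 2)) :
      |∫ t in (0:ℝ)..1 / 2, t * h t| ≤ ∫ t in (0:ℝ)..1 / 2, t * |h t| := by
    refine (intervalIntegral.abs_integral_le_integral_abs (by norm_num)).trans_eq ?_
    refine intervalIntegral.integral_congr fun t ht => ?_
    rw [uIcc_of_le (by norm_num)] at ht
    simp only [abs_mul, abs_of_nonneg ht.1]
  have hleft : IntervalIntegrable φ' volume 0 (1 / 2) :=
    hφ'.mono_set (uIcc_subset_uIcc_left (by norm_num))
  have hright : IntervalIntegrable (fun t => φ' (1 - t)) volume 0 (1 / 2) := by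
    have := (hφ'.mono_set (uIcc_subset_uIcc_right (by norm_num : (1 / 2 : ℝ) ∈ uIcc 0 1))).symm
    convert this.comp_sub_left 1 using 1 <;> norm_num
  have hbound₁ := integral_mul_le_of_le_mul_rpow hq hK hc
    (hleft.abs.continuousOn_mul continuousOn_id) fun t ht => hle t ⟨ht.1, by linarith [ht.2]⟩
  have hbound₂ := integral_mul_le_of_le_mul_rpow (h := fun t => |φ' (1 - t)|) hq
    (mul_nonneg hK hc) (inv_nonneg.2 hc) (hright.abs.continuousOn_mul continuousOn_id)
    fun t ht => by
      have h1t : (1:ℝ) - t ≠ 0 := by linarith [ht.2]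
      calc |φ' (1 - t)| ≤ K * c ^ (1 - t) := hle (1 - t) ⟨by linarith [ht.2], by linarith [ht.1]⟩
        _ = K * c * c⁻¹ ^ t := by
          rw [rpow_sub' hc h1t, inv_rpow hc, rpow_one, div_eq_mul_inv, mul_assoc]
  rw [midpoint_sub_integral_eq hφ hφ']
  calc _ ≤ |∫ t in (0:ℝ)..1 / 2, t * φ' t| + |∫ t in (0:ℝ)..1 / 2, t * φ' (1 - t)| := abs_sub _ _
    _ ≤ _ := add_le_add (habs_integral hleft) (habs_integral hright)
    _ ≤ _ := add_le_add hbound₁ hbound₂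
    _ = _ := by ring

theorem rpow_mul_rpow_one_sub_mul_rpow_mul_rpow_one_sub {a b A B s t : ℝ} (ha : 0 < a)
    (hb : 0 ≤ b) (hA : 0 < A) (hB : 0 ≤ B) :
    b ^ t * a ^ (1 - t) * (B ^ (s * t) * A ^ (1 - s * t)) =
      a * A * (b * B ^ s / (a * A ^ s)) ^ t := by
  rw [div_rpow (by positivity) (by positivity), mul_rpow hb (by positivity),
    mul_rpow ha.le (by positivity), ← rpow_mul hB, ← rpow_mul hA.le, rpow_sub ha, rpow_sub hA,
    rpow_one, rpow_one]
  field_simp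

theorem stmt_9_general
    (I : Set ℝ) (hI : I.OrdConnected) (hIpos : I ⊆ Set.Ioi (0:ℝ))
    (f f' : ℝ → ℝ)
    (a b : ℝ) (ha : a ∈ interior I) (hb : b ∈ interior I) (hab : a < b)
    (hdiff : ∀ x ∈ interior I, HasDerivAt f (f' x) x)
    (hint : IntervalIntegrable f' volume a b)
    (q s : ℝ) (hq : 1 ≤ q) (hs : s ∈ Set.Ioc (0:ℝ) 1)
    (hconv : SGeometricallyConvexOn s (Set.Icc a b) (fun x => |f' x| ^ q))
    (hfb : |f' b| ≤ 1) (hfa : 1 ≤ |f' a|) :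
    |f (Real.sqrt (a * b)) - (1 / (Real.log b - Real.log a)) * ∫ x in a..b, f x / x| ≤
      Real.log (b / a) * (1 / 2 : ℝ) ^ (3 - 1 / q) *
        (a * |f' a| * (g₁ ((b * |f' b| ^ s / (a * |f' a| ^ s)) ^ (q / 2))) ^ (1 / q)
         + b * |f' b| ^ s * |f' a| ^ (1 - s) * (g₁ ((a * |f' a| ^ s / (b * |f' b| ^ s)) ^ (q / 2))) ^ (1 / q)) := by
  have ha₀ : 0 < a := hIpos (interior_subset ha)
  have hb₀ : 0 < b := hIpos (interior_subset hb)
  have hIab : Icc a b ⊆ interior I := hI.interior.out ha hb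
  have hL : 0 < Real.log b - Real.log a := sub_pos.2 (Real.log_lt_log ha₀ hab)
  have hA : 0 < |f' a| := zero_lt_one.trans_le hfa
  have hsqrt : Real.sqrt (a * b) = b ^ (1 / 2 : ℝ) * a ^ (1 - 1 / 2 : ℝ) := by
    rw [sqrt_eq_rpow, mul_rpow ha₀.le hb₀.le, mul_comm]
    norm_num
  rw [hsqrt, integral_div_eq_mul_integral_rpow_mul_rpow_one_sub ha₀ hab.le
    (fun x hx => (hdiff x (hIab hx)).continuousAt.continuousWithinAt), ← mul_assoc,
    one_div_mul_cancel hL.ne', one_mul, Real.log_div hb₀.ne' ha₀.ne']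
  set L := Real.log b - Real.log a
  set c := b * |f' b| ^ s / (a * |f' a| ^ s) with hc
  have hφ (t) (ht : t ∈ Icc (0:ℝ) 1) : HasDerivAt (fun t => f (b ^ t * a ^ (1 - t)))
      (f' (b ^ t * a ^ (1 - t)) * (b ^ t * a ^ (1 - t) * L)) t :=
    (hdiff _ (hIab (rpow_mul_rpow_one_sub_mem_Icc ha₀ hab.le ht))).comp t
      (hasDerivAt_rpow_mul_rpow_one_sub ha₀ hb₀ t)
  have hφ_le (t) (ht : t ∈ Icc (0:ℝ) 1) :
      |f' (b ^ t * a ^ (1 - t)) * (b ^ t * a ^ (1 - t) * L)| ≤ L * (a * |f' a|) * c ^ t :=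
    calc |f' (b ^ t * a ^ (1 - t)) * (b ^ t * a ^ (1 - t) * L)|
        = L * (b ^ t * a ^ (1 - t) * |f' (b ^ t * a ^ (1 - t))|) := by
          rw [abs_mul, abs_of_pos (mul_pos (by positivity) hL)]
          ring
      _ ≤ L * (b ^ t * a ^ (1 - t) * (|f' b| ^ (s * t) * |f' a| ^ (1 - s * t))) := by
          gcongr
          exact hconv.abs_le_rpow_mul_rpow (zero_lt_one.trans_le hq) hs.1.le hs.2
            (right_mem_Icc.2 hab.le) (left_mem_Icc.2 hab.le) hfb hfa ht
      _ = L * (a * |f' a|) * c ^ t := by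
          rw [hc, rpow_mul_rpow_one_sub_mul_rpow_mul_rpow_one_sub ha₀ hb₀.le hA (abs_nonneg _)]
          ring
  have key := abs_midpoint_sub_integral_le hq (by positivity) (by positivity) hφ
    (hint.comp_rpow_mul_rpow_one_sub_mul_deriv ha₀ hab) hφ_le
  have hKc : L * (a * |f' a|) * c = L * (b * |f' b| ^ s * |f' a| ^ (1 - s)) := by
    rw [hc, rpow_sub hA, rpow_one]
    field_simp
  rw [hKc, inv_div] at key
  convert key using 1
  ring

theorem stmt_9
    (I : Set ℝ) (hI : I.OrdConnected) (hIpos : I ⊆ Set.Ioi (0:ℝ))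
    (f f' : ℝ → ℝ) (hfpos : ∀ x ∈ I, 0 < f x)
    (a b : ℝ) (ha : a ∈ interior I) (hb : b ∈ interior I) (hab : a < b)
    (hdiff : ∀ x ∈ interior I, HasDerivAt f (f' x) x)
    (hint : IntervalIntegrable f' volume a b)
    (q s : ℝ) (hq : 1 ≤ q) (hs : s ∈ Set.Ioc (0:ℝ) 1)
    (hconv : SGeometricallyConvexOn s (Set.Icc a b) (fun x => |f' x| ^ q))
    (hfb : |f' b| ≤ 1) (hfa : 1 ≤ |f' a|) :
    |f (Real.sqrt (a * b)) - (1 / (Real.log b - Real.log a)) * ∫ x in a..b, f x / x| ≤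
      Real.log (b / a) * (1 / 2 : ℝ) ^ (3 - 1 / q) *
        (a * |f' a| * (g₁ ((b * |f' b| ^ s / (a * |f' a| ^ s)) ^ (q / 2))) ^ (1 / q)
         + b * |f' b| ^ s * |f' a| ^ (1 - s) * (g₁ ((a * |f' a| ^ s / (b * |f' b| ^ s)) ^ (q / 2))) ^ (1 / q)) :=
  stmt_9_general I hI hIpos f f' a b ha hb hab hdiff hint q s hq hs hconv hfb hfa
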